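/- arXiv:1907.06049 — 2 statements merged into one kernel-verified Lean document; each statement's English description precedes it below -/
import Mathlib

section
/- For a symmetric positive definite n×n real matrix P with eigenvalues d_1 ≥ ... ≥ d_n > 0, the function θ ↦ γ(P,θ) := log det(I - θP) + tr((I - θP)^{-1} - I) is strictly increasing on [0, 1/d_1), equals 0 at θ = 0, and tends to +∞ as θ → (1/d_1)⁻. Consequently, for every c > 0 there exists a unique θ ∈ (0, 1/d_1) with γ(P,θ) = c. -/
open Matrix

noncomputable def gam {n : ℕ} (P : Matrix (Fin n) (Fin n) ℝ) (θ : ℝ) : ℝ :=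
  Real.log ((1 - θ • P).det) + ((1 - θ • P)⁻¹).trace - n

/-- The scalar building block. -/
noncomputable def fgam (x : ℝ) : ℝ := Real.log (1 - x) + (1 - x)⁻¹ - 1

lemma fgam_zero : fgam 0 = 0 := by simp [fgam]

lemma fgam_hasDerivAt {x : ℝ} (hx : 1 - x ≠ 0) :
    HasDerivAt fgam (x / (1 - x) ^ 2) x := by
  have h1 : HasDerivAt (fun y : ℝ => 1 - y) (-1) x := (hasDerivAt_id x).const_sub 1
  have hlog : HasDerivAt (fun y : ℝ => Real.log (1 - y)) ((1 - x)⁻¹ * (-1)) x :=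
    (Real.hasDerivAt_log hx).comp x h1
  have hinv : HasDerivAt (fun y : ℝ => (1 - y)⁻¹) (-(-1) / (1 - x) ^ 2) x := h1.inv hx
  have := (hlog.add hinv).sub_const 1
  refine HasDerivAt.congr_deriv this ?_
  field_simp
  ring

lemma fgam_strictMonoOn : StrictMonoOn fgam (Set.Ico 0 1) := by
  have hsub : Set.Ico (0:ℝ) 1 ⊆ {y : ℝ | 1 - y ≠ 0} := by
    intro y hy
    simp only [Set.mem_setOf_eq]
    intro h
    have : y = 1 := by linarith [sub_eq_zero.mp h]
    exact absurd this (ne_of_lt hy.2)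
  apply strictMonoOn_of_deriv_pos (convex_Ico 0 1)
  · intro y hy
    exact ((fgam_hasDerivAt (hsub hy)).continuousAt).continuousWithinAt
  · intro y hy
    rw [interior_Ico] at hy
    have h1 : (0:ℝ) < 1 - y := by linarith [hy.1, hy.2]
    rw [(fgam_hasDerivAt (ne_of_gt h1)).deriv]
    have hy1 := hy.1
    positivity

lemma fgam_nonneg {x : ℝ} (hx : x ∈ Set.Ico (0:ℝ) 1) : 0 ≤ fgam x := by
  rcases eq_or_lt_of_le hx.1 with h | h
  · rw [← h, fgam_zero]
  · have := fgam_strictMonoOn (Set.left_mem_Ico.mpr one_pos) hx h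
    rw [fgam_zero] at this
    exact le_of_lt this

/-- `log y + 1/(2y) ≥ 0` for `y > 0`. -/
lemma log_add_half_inv_nonneg {y : ℝ} (hy : 0 < y) : 0 ≤ Real.log y + (2 * y)⁻¹ := by
  set s := Real.sqrt y⁻¹ with hs
  have hs0 : 0 < s := Real.sqrt_pos.mpr (inv_pos.mpr hy)
  have hs2 : s ^ 2 = y⁻¹ := Real.sq_sqrt (le_of_lt (inv_pos.mpr hy))
  have hlog : Real.log y⁻¹ = 2 * Real.log s := by
    rw [← hs2, Real.log_pow]; push_cast; ring
  have h1 : Real.log s ≤ s - 1 := Real.log_le_sub_one_of_pos hs0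
  have h2 : 2 * (s - 1) ≤ s ^ 2 / 2 := by nlinarith [sq_nonneg (s - 2)]
  have : Real.log y⁻¹ ≤ y⁻¹ / 2 := by
    rw [hlog, ← hs2]; linarith
  rw [Real.log_inv] at this
  have h3 : (2 * y)⁻¹ = y⁻¹ / 2 := by
    rw [mul_inv]; ring
  linarith

lemma fgam_lower {x : ℝ} (hx : x < 1) : (2 * (1 - x))⁻¹ - 1 ≤ fgam x := by
  have h1 : (0:ℝ) < 1 - x := by linarith
  have := log_add_half_inv_nonneg h1
  have h4 : (1 - x)⁻¹ = 2 * (2 * (1 - x))⁻¹ := by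
    rw [mul_inv]; ring
  unfold fgam
  linarith

section Matrix

variable {n : ℕ} (P : Matrix (Fin n) (Fin n) ℝ) (hP : P.PosDef)

/-- Key diagonalization identity. -/
lemma gam_eq_sum (θ : ℝ) (h : ∀ i, 1 - θ * hP.1.eigenvalues i ≠ 0) :
    gam P θ = ∑ i, fgam (θ * hP.1.eigenvalues i) := by
  classical
  set d := hP.1.eigenvalues with hd
  set U : Matrix (Fin n) (Fin n) ℝ := (hP.1.eigenvectorUnitary : Matrix (Fin n) (Fin n) ℝ) with hU
  have hU1 : U * star U = 1 := Matrix.mem_unitaryGroup_iff.mp hP.1.eigenvectorUnitary.2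
  have hU2 : star U * U = 1 := Matrix.mem_unitaryGroup_iff'.mp hP.1.eigenvectorUnitary.2
  have hspec : P = U * diagonal d * star U := by
    have := hP.1.spectral_theorem
    simpa using this
  have hD : diagonal (fun i => 1 - θ * d i) = 1 - θ • diagonal d := by
    ext i j
    by_cases hij : i = j
    · subst hij; simp
    · simp [Matrix.diagonal_apply_ne _ hij, Matrix.one_apply_ne hij]
  have key1 : 1 - θ • P = U * diagonal (fun i => 1 - θ * d i) * star U := by
    rw [hspec, hD, Matrix.mul_sub, Matrix.sub_mul, Matrix.mul_one, hU1,
      mul_smul_comm, smul_mul_assoc]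
  have hdet : (1 - θ • P).det = ∏ i, (1 - θ * d i) := by
    rw [key1, det_mul_right_comm, hU1, one_mul, det_diagonal]
  have hinv : (1 - θ • P)⁻¹ = U * diagonal (fun i => (1 - θ * d i)⁻¹) * star U := by
    apply Matrix.inv_eq_right_inv
    rw [key1]
    have hDD : diagonal (fun i => 1 - θ * d i) * diagonal (fun i => (1 - θ * d i)⁻¹)
        = (1 : Matrix (Fin n) (Fin n) ℝ) := by
      rw [Matrix.diagonal_mul_diagonal]
      have hfun : (fun i => (1 - θ * d i) * (1 - θ * d i)⁻¹) = fun _ : Fin n => (1:ℝ) :=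
        funext fun i => mul_inv_cancel₀ (h i)
      rw [hfun, Matrix.diagonal_one]
    calc (U * diagonal (fun i => 1 - θ * d i) * star U) *
          (U * diagonal (fun i => (1 - θ * d i)⁻¹) * star U)
        = U * (diagonal (fun i => 1 - θ * d i) * ((star U * U) *
            (diagonal (fun i => (1 - θ * d i)⁻¹) * star U))) := by
          simp only [Matrix.mul_assoc]
      _ = 1 := by
          rw [hU2, one_mul, ← Matrix.mul_assoc (diagonal _), hDD, one_mul]
          exact hU1
  have htr : ((1 - θ • P)⁻¹).trace = ∑ i, (1 - θ * d i)⁻¹ := by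
    rw [hinv, Matrix.trace_mul_cycle, hU2, one_mul, Matrix.trace_diagonal]
  have hlogdet : Real.log ((1 - θ • P).det) = ∑ i, Real.log (1 - θ * d i) := by
    rw [hdet, Real.log_prod (fun i _ => h i)]
  unfold gam fgam
  rw [hlogdet, htr, Finset.sum_sub_distrib, ← Finset.sum_add_distrib]
  simp [Finset.card_univ]

end Matrix

theorem stmt_1 {n : ℕ} (hn : 0 < n) (P : Matrix (Fin n) (Fin n) ℝ)
    (hP : P.PosDef) (d₁ : ℝ)
    (hd₁max : ∀ i, hP.1.eigenvalues i ≤ d₁)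
    (hd₁mem : ∃ i, hP.1.eigenvalues i = d₁) :
    StrictMonoOn (gam P) (Set.Ico 0 (1 / d₁)) ∧
    gam P 0 = 0 ∧
    Filter.Tendsto (gam P) (nhdsWithin (1 / d₁) (Set.Iio (1 / d₁))) Filter.atTop ∧
    ∀ c : ℝ, 0 < c → ∃! θ : ℝ, θ ∈ Set.Ioo 0 (1 / d₁) ∧ gam P θ = c := by
  classical
  haveI : Nonempty (Fin n) := Fin.pos_iff_nonempty.mp hn
  set d := hP.1.eigenvalues with hd
  have dpos : ∀ i, 0 < d i := fun i => hP.eigenvalues_pos i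
  obtain ⟨i₀, hi₀⟩ := hd₁mem
  have hd₁pos : 0 < d₁ := hi₀ ▸ dpos i₀
  have hmem : ∀ θ ∈ Set.Ico (0:ℝ) (1 / d₁), ∀ i, θ * d i ∈ Set.Ico (0:ℝ) 1 := by
    intro θ hθ i
    constructor
    · exact mul_nonneg hθ.1 (dpos i).le
    · calc θ * d i ≤ θ * d₁ := mul_le_mul_of_nonneg_left (hd₁max i) hθ.1
        _ < 1 := (lt_div_iff₀ hd₁pos).mp hθ.2
  have hne : ∀ θ ∈ Set.Ico (0:ℝ) (1 / d₁), ∀ i, 1 - θ * d i ≠ 0 := by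
    intro θ hθ i
    have := (hmem θ hθ i).2
    intro hcon
    linarith [sub_eq_zero.mp hcon]
  have geq : ∀ θ ∈ Set.Ico (0:ℝ) (1 / d₁), gam P θ = ∑ i, fgam (θ * d i) := by
    intro θ hθ
    exact gam_eq_sum P hP θ (hne θ hθ)
  -- strict monotonicity
  have hsm : StrictMonoOn (gam P) (Set.Ico 0 (1 / d₁)) := by
    intro a ha b hb hab
    rw [geq a ha, geq b hb]
    apply Finset.sum_lt_sum_of_nonempty Finset.univ_nonempty
    intro i _
    exact fgam_strictMonoOn (hmem a ha i) (hmem b hb i)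
      (mul_lt_mul_of_pos_right hab (dpos i))
  have hIco0 : (0:ℝ) ∈ Set.Ico (0:ℝ) (1 / d₁) :=
    ⟨le_refl 0, by positivity⟩
  have h0 : gam P 0 = 0 := by
    rw [geq 0 hIco0]
    simp [fgam_zero]
  -- tendsto
  have hlb : ∀ θ ∈ Set.Ico (0:ℝ) (1 / d₁), (2 * (1 - θ * d₁))⁻¹ - 1 ≤ gam P θ := by
    intro θ hθ
    rw [geq θ hθ]
    have h1 : fgam (θ * d₁) ≤ ∑ i, fgam (θ * d i) := by
      rw [← hi₀]
      exact Finset.single_le_sum (fun i _ => fgam_nonneg (hmem θ hθ i))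
        (Finset.mem_univ i₀)
    have h2 : (2 * (1 - θ * d₁))⁻¹ - 1 ≤ fgam (θ * d₁) := by
      apply fgam_lower
      rw [← hi₀]
      exact (hmem θ hθ i₀).2
    linarith
  have htend : Filter.Tendsto (gam P) (nhdsWithin (1 / d₁) (Set.Iio (1 / d₁)))
      Filter.atTop := by
    have hTL : Filter.Tendsto (fun θ : ℝ => 2 * (1 - θ * d₁))
        (nhdsWithin (1 / d₁) (Set.Iio (1 / d₁))) (nhdsWithin 0 (Set.Ioi 0)) := by
      rw [tendsto_nhdsWithin_iff]
      constructor
      · have hc : Continuous (fun θ : ℝ => 2 * (1 - θ * d₁)) := by continuity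
        have h := (hc.tendsto (1 / d₁)).mono_left
          (nhdsWithin_le_nhds (s := Set.Iio (1 / d₁)))
        convert h using 2
        field_simp
        norm_num
      · apply eventually_nhdsWithin_of_forall
        intro θ hθ
        have hθ1 : θ * d₁ < 1 := (lt_div_iff₀ hd₁pos).mp hθ
        simp only [Set.mem_Ioi]
        nlinarith
    have hT2 : Filter.Tendsto (fun θ : ℝ => (2 * (1 - θ * d₁))⁻¹)
        (nhdsWithin (1 / d₁) (Set.Iio (1 / d₁))) Filter.atTop :=
      hTL.inv_tendsto_nhdsGT_zero
    have hT3 : Filter.Tendsto (fun θ : ℝ => (2 * (1 - θ * d₁))⁻¹ - 1)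
        (nhdsWithin (1 / d₁) (Set.Iio (1 / d₁))) Filter.atTop :=
      Filter.tendsto_atTop_add_const_right _ (-1) hT2
    apply Filter.tendsto_atTop_mono' _ _ hT3
    have hIoo : Set.Ioo (0:ℝ) (1 / d₁) ∈ nhdsWithin (1 / d₁) (Set.Iio (1 / d₁)) :=
      Ioo_mem_nhdsLT_of_mem ⟨by positivity, le_refl _⟩
    filter_upwards [hIoo] with θ hθ
    exact hlb θ ⟨hθ.1.le, hθ.2⟩
  refine ⟨hsm, h0, htend, ?_⟩
  -- existence and uniqueness
  intro c hc
  have hcont : ContinuousOn (gam P) (Set.Ico 0 (1 / d₁)) := by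
    apply ContinuousOn.congr (f := fun θ => ∑ i, fgam (θ * d i))
    · apply continuousOn_finset_sum
      intro i _
      have hbase : ContinuousOn (fun θ : ℝ => 1 - θ * d i) (Set.Ico 0 (1 / d₁)) := by
        fun_prop
      have hne' : ∀ θ ∈ Set.Ico (0:ℝ) (1 / d₁), 1 - θ * d i ≠ 0 :=
        fun θ hθ => hne θ hθ i
      have : ContinuousOn (fun θ : ℝ => Real.log (1 - θ * d i) + (1 - θ * d i)⁻¹ - 1)
          (Set.Ico 0 (1 / d₁)) :=
        ((hbase.log hne').add (hbase.inv₀ hne')).sub continuousOn_const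
      exact this
    · intro θ hθ
      exact geq θ hθ
  haveI : (nhdsWithin (1 / d₁) (Set.Iio (1 / d₁))).NeBot := by
    apply nhdsLT_neBot
  obtain ⟨θ', hθ'mem, hθ'gt⟩ :
      ∃ θ' : ℝ, θ' ∈ Set.Ioo (0:ℝ) (1 / d₁) ∧ c < gam P θ' := by
    have h1 := htend.eventually (Filter.eventually_gt_atTop c)
    have h2 : ∀ᶠ θ in nhdsWithin (1 / d₁) (Set.Iio (1 / d₁)), θ ∈ Set.Ioo (0:ℝ) (1 / d₁) :=
      Ioo_mem_nhdsLT_of_mem ⟨by positivity, le_refl _⟩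
    obtain ⟨θ', h2', h1'⟩ := (h2.and h1).exists
    exact ⟨θ', h2', h1'⟩
  have hsub : Set.Icc (0:ℝ) θ' ⊆ Set.Ico 0 (1 / d₁) := fun x hx =>
    ⟨hx.1, lt_of_le_of_lt hx.2 hθ'mem.2⟩
  have hivt := intermediate_value_Ico (le_of_lt hθ'mem.1) (hcont.mono hsub)
  have hcmem : c ∈ Set.Ico (gam P 0) (gam P θ') := by
    rw [h0]; exact ⟨hc.le, hθ'gt⟩
  obtain ⟨θ, hθIco, hθc⟩ := hivt hcmem
  have hθne : θ ≠ 0 := by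
    intro hcon
    rw [hcon, h0] at hθc
    exact absurd hθc.symm (ne_of_gt hc)
  have hθIoo : θ ∈ Set.Ioo (0:ℝ) (1 / d₁) :=
    ⟨lt_of_le_of_ne hθIco.1 (Ne.symm hθne), lt_trans hθIco.2 hθ'mem.2⟩
  refine ⟨θ, ⟨hθIoo, hθc⟩, ?_⟩
  intro y ⟨hy, hyc⟩
  exact hsm.injOn ⟨hy.1.le, hy.2⟩ ⟨hθIoo.1.le, hθIoo.2⟩ (by rw [hyc, hθc])
end

section
/- Consider the time-varying Lyapunov recursion X_{t+1} = A_t X_t A_tᵀ + Q_t where A_t → A and Q_t → Q as t → ∞, A is Schur stable, and Q_t are symmetric. Then X_t converges to the unique symmetric solution X of X = A X Aᵀ + Q. -/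
open Matrix Filter
open scoped Topology ENNReal NNReal

def SchurStable {ι : Type*} [Fintype ι] [DecidableEq ι]
    (M : Matrix ι ι ℝ) : Prop :=
  ∀ μ ∈ spectrum ℂ (M.map (algebraMap ℝ ℂ)), ‖μ‖ < 1

lemma aux_seq (u d : ℕ → ℝ) (γ : ℝ) (hγ0 : 0 ≤ γ) (hγ1 : γ < 1)
    (hu : ∀ t, 0 ≤ u t)
    (hrec : ∀ᶠ t in atTop, u (t + 1) ≤ γ * u t + d t)
    (hdlim : Tendsto d atTop (𝓝 0)) :
    Tendsto u atTop (𝓝 0) := by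
  rw [Metric.tendsto_atTop]
  intro ε hε
  have hεd : (0:ℝ) < (1 - γ) * (ε/4) := by nlinarith
  have hdev : ∀ᶠ t in atTop, d t ≤ (1 - γ) * (ε/4) := by
    filter_upwards [hdlim.eventually (Metric.ball_mem_nhds 0 hεd)] with t ht
    have : |d t| < (1 - γ) * (ε/4) := by simpa [Real.dist_eq] using ht
    linarith [abs_nonneg (d t), le_abs_self (d t)]
  obtain ⟨T, hT⟩ := ((hrec.and hdev).and (eventually_atTop.mpr ⟨0, fun _ _ => trivial⟩)).exists_forall_of_atTop
  have hT' : ∀ t ≥ T, u (t+1) ≤ γ * u t + (1 - γ) * (ε/4) := by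
    intro t ht
    obtain ⟨⟨h1, h2⟩, _⟩ := hT t ht
    linarith
  have key : ∀ k, u (T + k) ≤ γ ^ k * u T + ε/4 := by
    intro k
    induction k with
    | zero => simp; linarith
    | succ k ih =>
      have h1 := hT' (T + k) (Nat.le_add_right _ _)
      have hγk : (0:ℝ) ≤ γ ^ k := pow_nonneg hγ0 k
      calc u (T + (k+1)) = u ((T + k) + 1) := by ring_nf
        _ ≤ γ * u (T + k) + (1 - γ) * (ε/4) := h1
        _ ≤ γ * (γ ^ k * u T + ε/4) + (1 - γ) * (ε/4) := by nlinarith [hu (T+k)]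
        _ = γ ^ (k+1) * u T + (γ * (ε/4) + (1-γ) * (ε/4)) := by ring
        _ ≤ γ ^ (k+1) * u T + ε/4 := by nlinarith
  have hpow : Tendsto (fun k => γ ^ k * u T) atTop (𝓝 0) := by
    simpa using (tendsto_pow_atTop_nhds_zero_of_lt_one hγ0 hγ1).mul_const (u T)
  obtain ⟨K, hK⟩ := Metric.tendsto_atTop.mp hpow (ε/4) (by linarith)
  refine ⟨T + K, fun t ht => ?_⟩
  have htT : T ≤ t := le_trans (Nat.le_add_right _ _) ht
  obtain ⟨k, rfl⟩ := Nat.exists_eq_add_of_le htT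
  have hkK : K ≤ k := by omega
  have h2 : γ ^ k * u T < ε/4 := by
    have := hK k hkK
    rw [Real.dist_eq] at this
    calc γ ^ k * u T ≤ |γ ^ k * u T| := le_abs_self _
      _ < ε/4 := by simpa using this
  have := key k
  rw [Real.dist_eq, sub_zero, abs_of_nonneg (hu _)]
  linarith

section NormStuff

attribute [local instance] Matrix.linftyOpNormedAddCommGroup Matrix.linftyOpNormedRing
  Matrix.linftyOpNormedAlgebra

variable {n : ℕ}

lemma schur_pow {M : Matrix (Fin n) (Fin n) ℝ} (h : SchurStable M) :
    ∃ r : ℝ, 0 < r ∧ r < 1 ∧ ∀ᶠ k in atTop, ‖M ^ k‖ ≤ r ^ k := by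
  set a := M.map (algebraMap ℝ ℂ) with ha
  have hnorm : ∀ N : Matrix (Fin n) (Fin n) ℝ, ‖N.map (algebraMap ℝ ℂ)‖₊ = ‖N‖₊ := by
    intro N; simp [Matrix.linfty_opNNNorm_def, Matrix.map_apply]
  have hρ : spectralRadius ℂ a < 1 := by
    rcases Nat.eq_zero_or_pos n with hn | hn
    · have : Subsingleton (Matrix (Fin n) (Fin n) ℂ) := by
        subst hn; infer_instance
      rw [spectrum.SpectralRadius.of_subsingleton]; simp
    · have : Nontrivial (Matrix (Fin n) (Fin n) ℂ) := by
        have : Nonempty (Fin n) := ⟨⟨0, hn⟩⟩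
        infer_instance
      have := spectrum.spectralRadius_lt_of_forall_lt (a := a) (r := 1)
        (fun z hz => by simpa [← NNReal.coe_lt_coe] using h z hz)
      simpa using this
  obtain ⟨r, hr1, hr2⟩ := ENNReal.lt_iff_exists_nnreal_btwn.mp hρ
  have hr2' : r < 1 := by exact_mod_cast hr2
  set s : NNReal := max r (1/2) with hs
  have hs1 : s < 1 := max_lt hr2' one_half_lt_one
  have hs0 : 0 < s := lt_of_lt_of_le one_half_pos (le_max_right _ _)
  have hρs : spectralRadius ℂ a < (s : ℝ≥0∞) := lt_of_lt_of_le hr1 (by exact_mod_cast le_max_left _ _)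
  have hg := spectrum.pow_nnnorm_pow_one_div_tendsto_nhds_spectralRadius a
  have hev : ∀ᶠ k : ℕ in atTop, (‖a ^ k‖₊ : ℝ≥0∞) ^ ((1:ℝ) / (k:ℝ)) < (s : ℝ≥0∞) :=
    hg.eventually_lt_const hρs
  refine ⟨s, by exact_mod_cast hs0, by exact_mod_cast hs1, ?_⟩
  filter_upwards [hev, eventually_ge_atTop 1] with k hk hk1
  have hkpos : (0:ℝ) < (k:ℝ) := by exact_mod_cast hk1
  have hk' : (‖a ^ k‖₊ : ℝ≥0) ^ ((1:ℝ) / (k:ℝ)) < s := by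
    rw [← ENNReal.coe_rpow_of_nonneg _ (by positivity)] at hk
    exact_mod_cast hk
  have hle : ‖a ^ k‖₊ ≤ s ^ k := by
    have := (NNReal.rpow_inv_le_iff (x := ‖a ^ k‖₊) (y := s) hkpos).mp (by rw [← one_div]; exact hk'.le)
    rwa [NNReal.rpow_natCast] at this
  have hMk : ‖M ^ k‖₊ = ‖a ^ k‖₊ := by
    have : M.map (algebraMap ℝ ℂ) ^ k = (M ^ k).map (algebraMap ℝ ℂ) :=
      (map_pow ((algebraMap ℝ ℂ).mapMatrix) M k).symm
    rw [ha, this, hnorm]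
  calc ‖M ^ k‖ = (‖a ^ k‖₊ : ℝ) := by rw [← hMk]; rfl
    _ ≤ ((s:ℝ) ^ k) := by exact_mod_cast hle

lemma schur_transpose {M : Matrix (Fin n) (Fin n) ℝ} (h : SchurStable M) :
    SchurStable Mᵀ := by
  intro μ hμ
  apply h μ
  rw [spectrum.mem_iff] at hμ ⊢
  intro hunit
  apply hμ
  have key : algebraMap ℂ (Matrix (Fin n) (Fin n) ℂ) μ - Mᵀ.map (algebraMap ℝ ℂ)
      = (algebraMap ℂ (Matrix (Fin n) (Fin n) ℂ) μ - M.map (algebraMap ℝ ℂ))ᵀ := by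
    rw [Matrix.transpose_sub, Matrix.transpose_map]
    congr 1
    · rw [Matrix.algebraMap_eq_diagonal]
      exact (Matrix.diagonal_transpose _).symm
  rw [key, Matrix.isUnit_iff_isUnit_det, Matrix.det_transpose,
    ← Matrix.isUnit_iff_isUnit_det]
  exact hunit

set_option maxHeartbeats 2000000 in
lemma main_aux {n : ℕ}
    (A Q X : ℕ → Matrix (Fin n) (Fin n) ℝ)
    (Abar Qbar : Matrix (Fin n) (Fin n) ℝ)
    (hrec : ∀ t, X (t + 1) = A t * X t * (A t)ᵀ + Q t)
    (hA : Tendsto A atTop (nhds Abar))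
    (hQ : Tendsto Q atTop (nhds Qbar))
    (hQsym : ∀ t, (Q t).IsSymm)
    (hAs : SchurStable Abar) :
    ∃ Xinf : Matrix (Fin n) (Fin n) ℝ,
      Xinf.IsSymm ∧ Xinf = Abar * Xinf * Abarᵀ + Qbar ∧
      (∀ Y : Matrix (Fin n) (Fin n) ℝ, Y.IsSymm → Y = Abar * Y * Abarᵀ + Qbar → Y = Xinf) ∧
      Tendsto X atTop (nhds Xinf) := by
  classical
  -- geometric bounds
  obtain ⟨r1, hr10, hr11, hb1⟩ := schur_pow hAs
  obtain ⟨r2, hr20, hr21, hb2⟩ := schur_pow (schur_transpose hAs)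
  set r : ℝ := max r1 r2 with hrdef
  have hr0 : 0 < r := lt_of_lt_of_le hr10 (le_max_left _ _)
  have hr1 : r < 1 := max_lt hr11 hr21
  have hb1' : ∀ᶠ k in atTop, ‖Abar ^ k‖ ≤ r ^ k := by
    filter_upwards [hb1] with k hk
    exact hk.trans (pow_le_pow_left₀ hr10.le (le_max_left _ _) k)
  have hb2' : ∀ᶠ k in atTop, ‖Abarᵀ ^ k‖ ≤ r ^ k := by
    filter_upwards [hb2] with k hk
    exact hk.trans (pow_le_pow_left₀ hr20.le (le_max_right _ _) k)
  obtain ⟨m, hm1, hmA, hmAT⟩ : ∃ m, 1 ≤ m ∧ ‖Abar ^ m‖ ≤ r ^ m ∧ ‖Abarᵀ ^ m‖ ≤ r ^ m := by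
    obtain ⟨m, hm⟩ := ((hb1'.and hb2').and (eventually_ge_atTop 1)).exists
    exact ⟨m, hm.2, hm.1.1, hm.1.2⟩
  set β : ℝ := r ^ 2 with hβdef
  have hβ0 : 0 < β := by positivity
  have hβ1 : β < 1 := by nlinarith
  -- the adapted norm ν
  set g : Matrix (Fin n) (Fin n) ℝ → ℕ → ℝ :=
    fun Z k => ‖Abar ^ k * Z * Abarᵀ ^ k‖ with hgdef
  set ν : Matrix (Fin n) (Fin n) ℝ → ℝ :=
    fun Z => ∑ k ∈ Finset.range m, β⁻¹ ^ k * g Z k with hνdef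
  have hg0 : ∀ Z k, 0 ≤ g Z k := fun Z k => norm_nonneg _
  have hν0 : ∀ Z, 0 ≤ ν Z := by
    intro Z
    exact Finset.sum_nonneg fun k _ => mul_nonneg (by positivity) (hg0 Z k)
  have hνnorm : ∀ Z, ‖Z‖ ≤ ν Z := by
    intro Z
    have h := Finset.single_le_sum (f := fun k => β⁻¹ ^ k * g Z k)
      (fun k _ => mul_nonneg (by positivity) (hg0 Z k))
      (Finset.mem_range.mpr (by omega : 0 < m))
    simp only [pow_zero, one_mul] at h
    have h0 : g Z 0 = ‖Z‖ := by simp [hgdef]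
    rw [h0] at h
    exact h
  set K : ℝ := ∑ k ∈ Finset.range m, β⁻¹ ^ k * (‖Abar ^ k‖ * ‖Abarᵀ ^ k‖) with hKdef
  have hK0 : 0 ≤ K :=
    Finset.sum_nonneg fun k _ => mul_nonneg (by positivity) (by positivity)
  have hνle : ∀ Z, ν Z ≤ K * ‖Z‖ := by
    intro Z
    rw [hKdef, Finset.sum_mul]
    apply Finset.sum_le_sum
    intro k _
    have : g Z k ≤ ‖Abar ^ k‖ * ‖Abarᵀ ^ k‖ * ‖Z‖ := by
      calc g Z k ≤ ‖Abar ^ k * Z‖ * ‖Abarᵀ ^ k‖ := norm_mul_le _ _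
        _ ≤ ‖Abar ^ k‖ * ‖Z‖ * ‖Abarᵀ ^ k‖ :=
            mul_le_mul_of_nonneg_right (norm_mul_le _ _) (norm_nonneg _)
        _ = ‖Abar ^ k‖ * ‖Abarᵀ ^ k‖ * ‖Z‖ := by ring
    calc β⁻¹ ^ k * g Z k ≤ β⁻¹ ^ k * (‖Abar ^ k‖ * ‖Abarᵀ ^ k‖ * ‖Z‖) :=
          mul_le_mul_of_nonneg_left this (by positivity)
      _ = β⁻¹ ^ k * (‖Abar ^ k‖ * ‖Abarᵀ ^ k‖) * ‖Z‖ := by ring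
  have hνadd : ∀ Y Z, ν (Y + Z) ≤ ν Y + ν Z := by
    intro Y Z
    rw [hνdef]
    simp only
    rw [← Finset.sum_add_distrib]
    apply Finset.sum_le_sum
    intro k _
    have : g (Y + Z) k ≤ g Y k + g Z k := by
      simp only [hgdef]
      calc ‖Abar ^ k * (Y + Z) * Abarᵀ ^ k‖
          = ‖Abar ^ k * Y * Abarᵀ ^ k + Abar ^ k * Z * Abarᵀ ^ k‖ := by
            congr 1; noncomm_ring
        _ ≤ _ := norm_add_le _ _
    nlinarith [pow_nonneg (inv_nonneg.mpr hβ0.le) k]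
  have hνL : ∀ Z, ν (Abar * Z * Abarᵀ) ≤ β * ν Z := by
    intro Z
    have hstep : ∀ k, g (Abar * Z * Abarᵀ) k = g Z (k + 1) := by
      intro k
      simp only [hgdef]
      congr 1
      rw [pow_succ Abar k, pow_succ' Abarᵀ k]
      noncomm_ring
    have hgm : g Z m ≤ β ^ m * ‖Z‖ := by
      calc g Z m ≤ ‖Abar ^ m‖ * ‖Abarᵀ ^ m‖ * ‖Z‖ := by
            calc g Z m ≤ ‖Abar ^ m * Z‖ * ‖Abarᵀ ^ m‖ := norm_mul_le _ _
              _ ≤ ‖Abar ^ m‖ * ‖Z‖ * ‖Abarᵀ ^ m‖ :=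
                  mul_le_mul_of_nonneg_right (norm_mul_le _ _) (norm_nonneg _)
              _ = ‖Abar ^ m‖ * ‖Abarᵀ ^ m‖ * ‖Z‖ := by ring
        _ ≤ r ^ m * r ^ m * ‖Z‖ := by
            have h5 : ‖Abar ^ m‖ * ‖Abarᵀ ^ m‖ ≤ r ^ m * r ^ m :=
              mul_le_mul hmA hmAT (norm_nonneg _) (by positivity)
            exact mul_le_mul_of_nonneg_right h5 (norm_nonneg _)
        _ = β ^ m * ‖Z‖ := by rw [hβdef, ← pow_mul, mul_comm 2 m, pow_mul]; ring_nf
    have hβne : β ≠ 0 := ne_of_gt hβ0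
    have e0 : ∀ (x : ℝ) (k : ℕ), β⁻¹ ^ k * x = β * (β⁻¹ ^ (k+1) * x) := by
      intro x k
      rw [pow_succ]
      field_simp
    have hsum : ν (Abar * Z * Abarᵀ)
        = β * ((∑ k ∈ Finset.range m, β⁻¹ ^ k * g Z k) - g Z 0 + β⁻¹ ^ m * g Z m) := by
      calc ν (Abar * Z * Abarᵀ)
          = ∑ k ∈ Finset.range m, β * (β⁻¹ ^ (k+1) * g Z (k+1)) :=
            Finset.sum_congr rfl (fun k _ => by rw [hstep k, ← e0])
        _ = β * ∑ k ∈ Finset.range m, β⁻¹ ^ (k+1) * g Z (k+1) := by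
            rw [Finset.mul_sum]
        _ = β * ((∑ k ∈ Finset.range m, β⁻¹ ^ k * g Z k) - g Z 0 + β⁻¹ ^ m * g Z m) := by
            congr 1
            have h1 : ∑ k ∈ Finset.range (m+1), β⁻¹ ^ k * g Z k
                = (∑ k ∈ Finset.range m, β⁻¹ ^ k * g Z k) + β⁻¹ ^ m * g Z m :=
              Finset.sum_range_succ _ m
            have h2 : ∑ k ∈ Finset.range (m+1), β⁻¹ ^ k * g Z k
                = (∑ k ∈ Finset.range m, β⁻¹ ^ (k+1) * g Z (k+1)) + β⁻¹ ^ 0 * g Z 0 :=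
              Finset.sum_range_succ' _ m
            have h3 := h1.symm.trans h2
            simp only [pow_zero, one_mul] at h3
            linarith
    rw [hsum]
    have hterm : β⁻¹ ^ m * g Z m ≤ g Z 0 := by
      have hg0' : g Z 0 = ‖Z‖ := by simp [hgdef]
      rw [hg0']
      calc β⁻¹ ^ m * g Z m ≤ β⁻¹ ^ m * (β ^ m * ‖Z‖) :=
          mul_le_mul_of_nonneg_left hgm (by positivity)
        _ = ‖Z‖ := by rw [inv_pow, ← mul_assoc, inv_mul_cancel₀ (pow_ne_zero _ hβne), one_mul]
    have hin : (∑ k ∈ Finset.range m, β⁻¹ ^ k * g Z k) - g Z 0 + β⁻¹ ^ m * g Z m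
        ≤ ν Z := by
      have hν : ν Z = ∑ k ∈ Finset.range m, β⁻¹ ^ k * g Z k := rfl
      rw [hν]
      linarith
    exact mul_le_mul_of_nonneg_left hin hβ0.le
  -- the fixed point via tsum
  set f : ℕ → Matrix (Fin n) (Fin n) ℝ := fun k => Abar ^ k * Qbar * Abarᵀ ^ k with hfdef
  have hsummable : Summable f := by
    apply Summable.of_norm_bounded_eventually_nat (g := fun k => ‖Qbar‖ * β ^ k)
    · exact (summable_geometric_of_lt_one hβ0.le hβ1).mul_left _
    · filter_upwards [hb1', hb2'] with k h1 h2
      calc ‖f k‖ ≤ ‖Abar ^ k‖ * ‖Abarᵀ ^ k‖ * ‖Qbar‖ := by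
            calc ‖f k‖ ≤ ‖Abar ^ k * Qbar‖ * ‖Abarᵀ ^ k‖ := norm_mul_le _ _
              _ ≤ ‖Abar ^ k‖ * ‖Qbar‖ * ‖Abarᵀ ^ k‖ :=
                  mul_le_mul_of_nonneg_right (norm_mul_le _ _) (norm_nonneg _)
              _ = ‖Abar ^ k‖ * ‖Abarᵀ ^ k‖ * ‖Qbar‖ := by ring
        _ ≤ r ^ k * r ^ k * ‖Qbar‖ :=
            mul_le_mul_of_nonneg_right
              (mul_le_mul h1 h2 (norm_nonneg _) (by positivity)) (norm_nonneg _)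
        _ = ‖Qbar‖ * β ^ k := by rw [hβdef, ← pow_mul, mul_comm 2 k, pow_mul]; ring
  set S : Matrix (Fin n) (Fin n) ℝ := ∑' k, f k with hSdef
  have hS1 : HasSum f S := hsummable.hasSum
  have hLcont : Continuous (fun Z : Matrix (Fin n) (Fin n) ℝ => Abar * Z * Abarᵀ) :=
    (continuous_const.mul continuous_id).mul continuous_const
  have hLhom : ∀ Y Z : Matrix (Fin n) (Fin n) ℝ,
      Abar * (Y + Z) * Abarᵀ = Abar * Y * Abarᵀ + Abar * Z * Abarᵀ := by
    intro Y Z; noncomm_ring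
  have hLsum : HasSum (fun k => Abar * f k * Abarᵀ) (Abar * S * Abarᵀ) :=
    hS1.map (AddMonoidHom.mk' (fun Z => Abar * Z * Abarᵀ) hLhom) hLcont
  have h3 : ∀ k, Abar * f k * Abarᵀ = f (k + 1) := by
    intro k
    show Abar * (Abar ^ k * Qbar * Abarᵀ ^ k) * Abarᵀ = Abar ^ (k+1) * Qbar * Abarᵀ ^ (k+1)
    rw [pow_succ' Abar k, pow_succ Abarᵀ k]
    noncomm_ring
  have hLsum' : HasSum (fun k => f (k + 1)) (Abar * S * Abarᵀ) := by
    refine HasSum.congr_fun hLsum ?_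
    intro k; exact (h3 k).symm
  have hfix : S = Abar * S * Abarᵀ + Qbar := by
    have h4 : S = f 0 + ∑' k, f (k + 1) := Summable.tsum_eq_zero_add hsummable
    have h5 : f 0 = Qbar := by
      show Abar ^ 0 * Qbar * Abarᵀ ^ 0 = Qbar
      simp
    have h6 : (∑' k, f (k+1)) = Abar * S * Abarᵀ := hLsum'.tsum_eq
    calc S = f 0 + ∑' k, f (k + 1) := h4
      _ = Abar * S * Abarᵀ + Qbar := by rw [h5, h6, add_comm]
  -- uniqueness
  have huniq : ∀ Y : Matrix (Fin n) (Fin n) ℝ, Y = Abar * Y * Abarᵀ + Qbar → Y = S := by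
    intro Y hY
    have hD : Y - S = Abar * (Y - S) * Abarᵀ := by
      calc Y - S = (Abar * Y * Abarᵀ + Qbar) - (Abar * S * Abarᵀ + Qbar) := by
            rw [← hY, ← hfix]
        _ = Abar * (Y - S) * Abarᵀ := by noncomm_ring
    have : ν (Y - S) ≤ β * ν (Y - S) := by
      conv_lhs => rw [hD]
      exact hνL _
    have hν00 : ν (Y - S) ≤ 0 := by nlinarith [hν0 (Y - S)]
    have : ‖Y - S‖ ≤ 0 := le_trans (hνnorm _) hν00
    have : Y - S = 0 := by
      rwa [← norm_le_zero_iff]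
    exact sub_eq_zero.mp this
  -- symmetry of Qbar
  have hQbar_symm : Qbar.IsSymm := by
    have htr : Tendsto (fun t => (Q t)ᵀ) atTop (𝓝 Qbarᵀ) :=
      (Continuous.matrix_transpose continuous_id).continuousAt.tendsto.comp hQ
    have : Tendsto Q atTop (𝓝 Qbarᵀ) := by
      apply htr.congr
      intro t
      exact hQsym t
    exact tendsto_nhds_unique this hQ
  -- symmetry of S
  have hS_symm : S.IsSymm := by
    have hfsymm : ∀ k, (f k)ᵀ = f k := by
      intro k
      rw [hfdef]
      simp only
      rw [Matrix.transpose_mul, Matrix.transpose_mul, Matrix.transpose_pow,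
        Matrix.transpose_transpose, hQbar_symm.eq, Matrix.transpose_pow]
      noncomm_ring
    have hS1 : HasSum f S := hsummable.hasSum
    have hS2 : HasSum (fun k => (f k)ᵀ) Sᵀ :=
      hS1.map (Matrix.transposeAddEquiv (Fin n) (Fin n) ℝ).toAddMonoidHom
        (Continuous.matrix_transpose continuous_id)
    have hS3 : HasSum f Sᵀ := by
      refine HasSum.congr_fun hS2 ?_
      intro k
      exact (hfsymm k).symm
    exact hS3.unique hS1
  -- error recursion
  set E : ℕ → Matrix (Fin n) (Fin n) ℝ := fun t => X t - S with hEdef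
  set D : ℕ → Matrix (Fin n) (Fin n) ℝ :=
    fun t => A t * S * (A t)ᵀ - Abar * S * Abarᵀ + (Q t - Qbar) with hDdef
  have hErec : ∀ t, E (t+1) = A t * E t * (A t)ᵀ + D t := by
    intro t
    show X (t+1) - S
      = A t * (X t - S) * (A t)ᵀ + (A t * S * (A t)ᵀ - Abar * S * Abarᵀ + (Q t - Qbar))
    rw [hrec t]
    conv_lhs => rw [hfix]
    noncomm_ring
  have hAT : Tendsto (fun t => (A t)ᵀ) atTop (𝓝 Abarᵀ) :=
    ((Continuous.matrix_transpose continuous_id).continuousAt.tendsto).comp hA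
  have hD0 : Tendsto D atTop (𝓝 0) := by
    have h1 : Tendsto (fun t => A t * S * (A t)ᵀ) atTop (𝓝 (Abar * S * Abarᵀ)) :=
      (hA.mul_const S).mul hAT
    have h2 : Tendsto (fun t => A t * S * (A t)ᵀ - Abar * S * Abarᵀ) atTop (𝓝 0) := by
      simpa using h1.sub_const (Abar * S * Abarᵀ)
    have h3 : Tendsto (fun t => Q t - Qbar) atTop (𝓝 0) := by
      simpa using hQ.sub_const Qbar
    simpa using h2.add h3
  set c : ℕ → ℝ := fun t => ‖A t - Abar‖ * ‖(A t)ᵀ‖ + ‖Abar‖ * ‖(A t)ᵀ - Abarᵀ‖ with hcdef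
  have hc0 : Tendsto c atTop (𝓝 0) := by
    have h1 : Tendsto (fun t => ‖A t - Abar‖) atTop (𝓝 0) :=
      tendsto_iff_norm_sub_tendsto_zero.mp hA
    have h1' : Tendsto (fun t => ‖(A t)ᵀ‖) atTop (𝓝 ‖Abarᵀ‖) := hAT.norm
    have h2 : Tendsto (fun t => ‖(A t)ᵀ - Abarᵀ‖) atTop (𝓝 0) :=
      tendsto_iff_norm_sub_tendsto_zero.mp hAT
    have h4 := (h1.mul h1').add ((tendsto_const_nhds (x := ‖Abar‖)).mul h2)
    rw [show (0:ℝ) = 0 * ‖Abarᵀ‖ + ‖Abar‖ * 0 by ring]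
    exact h4
  have tri : ∀ (P Z R : Matrix (Fin n) (Fin n) ℝ), ‖P * Z * R‖ ≤ ‖P‖ * ‖Z‖ * ‖R‖ :=
    fun P Z R => le_trans (norm_mul_le _ _)
      (mul_le_mul_of_nonneg_right (norm_mul_le _ _) (norm_nonneg _))
  have hcnn : ∀ t, 0 ≤ c t := by
    intro t
    rw [hcdef]
    positivity
  have hnub : ∀ t (Z : Matrix (Fin n) (Fin n) ℝ),
      ‖A t * Z * (A t)ᵀ - Abar * Z * Abarᵀ‖ ≤ c t * ‖Z‖ := by
    intro t Z
    have hid : A t * Z * (A t)ᵀ - Abar * Z * Abarᵀ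
        = (A t - Abar) * Z * (A t)ᵀ + Abar * Z * ((A t)ᵀ - Abarᵀ) := by noncomm_ring
    rw [hid]
    calc ‖(A t - Abar) * Z * (A t)ᵀ + Abar * Z * ((A t)ᵀ - Abarᵀ)‖
        ≤ ‖(A t - Abar) * Z * (A t)ᵀ‖ + ‖Abar * Z * ((A t)ᵀ - Abarᵀ)‖ := norm_add_le _ _
      _ ≤ ‖A t - Abar‖ * ‖Z‖ * ‖(A t)ᵀ‖ + ‖Abar‖ * ‖Z‖ * ‖(A t)ᵀ - Abarᵀ‖ :=
          add_le_add (tri _ _ _) (tri _ _ _)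
      _ = c t * ‖Z‖ := by rw [hcdef]; ring
  have hKc : Tendsto (fun t => K * c t) atTop (𝓝 0) := by
    have := hc0.const_mul K
    rwa [mul_zero] at this
  set γ : ℝ := (1 + β)/2 with hγdef
  have hγ1 : γ < 1 := by rw [hγdef]; linarith
  have hγ0 : 0 ≤ γ := by rw [hγdef]; linarith
  have hev : ∀ᶠ t in atTop, K * c t ≤ (1 - β)/2 := by
    have hpos : (0:ℝ) < (1-β)/2 := by linarith
    filter_upwards [hKc.eventually (Metric.ball_mem_nhds 0 hpos)] with t ht
    have h5 := mem_ball_zero_iff.mp ht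
    rw [Real.norm_eq_abs] at h5
    exact le_trans (le_abs_self _) h5.le
  have hrecu : ∀ᶠ t in atTop, ν (E (t+1)) ≤ γ * ν (E t) + ν (D t) := by
    filter_upwards [hev] with t ht
    have e1 : ν (E (t+1)) ≤ ν (A t * E t * (A t)ᵀ) + ν (D t) := by
      rw [hErec t]; exact hνadd _ _
    have e2 : ν (A t * E t * (A t)ᵀ)
        ≤ ν (Abar * E t * Abarᵀ) + ν (A t * E t * (A t)ᵀ - Abar * E t * Abarᵀ) := by
      have hsplit : A t * E t * (A t)ᵀ
          = Abar * E t * Abarᵀ + (A t * E t * (A t)ᵀ - Abar * E t * Abarᵀ) := by noncomm_ring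
      exact le_trans (le_of_eq (congrArg ν hsplit)) (hνadd _ _)
    have e3 : ν (A t * E t * (A t)ᵀ - Abar * E t * Abarᵀ) ≤ K * (c t * ‖E t‖) := by
      refine le_trans (hνle _) ?_
      exact mul_le_mul_of_nonneg_left (hnub t (E t)) hK0
    have e4 : ‖E t‖ ≤ ν (E t) := hνnorm _
    have e5 : ν (Abar * E t * Abarᵀ) ≤ β * ν (E t) := hνL _
    have e6 : K * (c t * ‖E t‖) ≤ (1-β)/2 * ν (E t) := by
      calc K * (c t * ‖E t‖) = (K * c t) * ‖E t‖ := by ring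
        _ ≤ (1-β)/2 * ‖E t‖ := mul_le_mul_of_nonneg_right ht (norm_nonneg _)
        _ ≤ (1-β)/2 * ν (E t) := mul_le_mul_of_nonneg_left e4 (by linarith)
    have heq : γ * ν (E t) = β * ν (E t) + (1-β)/2 * ν (E t) := by rw [hγdef]; ring
    calc ν (E (t+1)) ≤ ν (A t * E t * (A t)ᵀ) + ν (D t) := e1
      _ ≤ (ν (Abar * E t * Abarᵀ) + ν (A t * E t * (A t)ᵀ - Abar * E t * Abarᵀ)) + ν (D t) :=
          add_le_add_left e2 _
      _ ≤ (β * ν (E t) + K * (c t * ‖E t‖)) + ν (D t) :=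
          add_le_add_left (add_le_add e5 e3) _
      _ ≤ (β * ν (E t) + (1-β)/2 * ν (E t)) + ν (D t) :=
          add_le_add_left (add_le_add_right e6 _) _
      _ = γ * ν (E t) + ν (D t) := by rw [heq]
  have hνD : Tendsto (fun t => ν (D t)) atTop (𝓝 0) := by
    have hDnorm : Tendsto (fun t => K * ‖D t‖) atTop (𝓝 0) := by
      simpa using (tendsto_iff_norm_sub_tendsto_zero.mp hD0).const_mul K
    exact squeeze_zero (fun t => hν0 _) (fun t => hνle _) hDnorm
  have hEν : Tendsto (fun t => ν (E t)) atTop (𝓝 0) :=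
    aux_seq _ _ γ hγ0 hγ1 (fun t => hν0 _) hrecu hνD
  have hEnorm : Tendsto (fun t => ‖E t‖) atTop (𝓝 0) :=
    squeeze_zero (fun t => norm_nonneg _) (fun t => hνnorm _) hEν
  have hXlim : Tendsto X atTop (𝓝 S) := tendsto_iff_norm_sub_tendsto_zero.mpr hEnorm
  exact ⟨S, hS_symm, hfix, fun Y _ hY => huniq Y hY, hXlim⟩

end NormStuff

theorem stmt_8 {n : ℕ}
    (A Q X : ℕ → Matrix (Fin n) (Fin n) ℝ)
    (Abar Qbar : Matrix (Fin n) (Fin n) ℝ)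
    (hrec : ∀ t, X (t + 1) = A t * X t * (A t)ᵀ + Q t)
    (hA : Tendsto A atTop (nhds Abar))
    (hQ : Tendsto Q atTop (nhds Qbar))
    (hQsym : ∀ t, (Q t).IsSymm)
    (hX0 : (X 0).IsSymm)
    (hAs : SchurStable Abar) :
    ∃ Xinf : Matrix (Fin n) (Fin n) ℝ,
      Xinf.IsSymm ∧ Xinf = Abar * Xinf * Abarᵀ + Qbar ∧
      (∀ Y : Matrix (Fin n) (Fin n) ℝ, Y.IsSymm → Y = Abar * Y * Abarᵀ + Qbar → Y = Xinf) ∧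
      Tendsto X atTop (nhds Xinf) :=
  main_aux A Q X Abar Qbar hrec hA hQ hQsym hAs
end
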